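/- arXiv:1505.06300 — 2 statements merged into one kernel-verified Lean document; each statement's English description precedes it below -/
import Mathlib

section
/- Let Z = x²·∂/∂x + (−λ + a₁x − c(y₁y₂))·y₁·∂/∂y₁ + (λ + a₂x + c(y₁y₂))·y₂·∂/∂y₂ and Z' = x²·∂/∂x + (−λ + a₁'x − c'(y₁y₂))·y₁·∂/∂y₁ + (λ + a₂'x + c'(y₁y₂))·y₂·∂/∂y₂ be two transversally Hamiltonian normal forms with the same λ ∈ ℂ\{0}, where a₁+a₂ = a₁'+a₂' = 1 and c, c' ∈ v·ℂ[[v]]. If some transversally symplectic formal diffeomorphism conjugates Z to Z', then a₁ = a₁', a₂ = a₂' and c = c'. -/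
open MvPowerSeries

noncomputable section

/-- `R3` is the ring `ℂ[[x, y₁, y₂]]` of formal power series in three variables, where
variable `0` plays the role of `x`, variable `1` of `y₁` and variable `2` of `y₂`. -/
abbrev R3 : Type := MvPowerSeries (Fin 3) ℂ

/-- Build a formal power series from its coefficient function. -/
def mk3 (g : (Fin 3 →₀ ℕ) → ℂ) : R3 := g

/-- Coefficient of the monomial with exponents `m` in `f`. -/
def cf (m : Fin 3 →₀ ℕ) (f : R3) : ℂ := MvPowerSeries.coeff m f

/-- The exponent vector of the monomial `x^{k₀} y₁^{k₁} y₂^{k₂}`. -/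
def e (k₀ k₁ k₂ : ℕ) : Fin 3 →₀ ℕ :=
  Finsupp.single 0 k₀ + Finsupp.single 1 k₁ + Finsupp.single 2 k₂

/-- Formal partial derivative with respect to the `i`-th variable. -/
def pd (i : Fin 3) (f : R3) : R3 :=
  mk3 fun m => ((m i : ℂ) + 1) * cf (m + Finsupp.single i 1) f

/-- The formal vector field (derivation) `b 0 · ∂/∂x + b 1 · ∂/∂y₁ + b 2 · ∂/∂y₂`. -/
def VF (b : Fin 3 → R3) (f : R3) : R3 := ∑ i : Fin 3, b i * pd i f

/-- The maximal ideal `𝔪` of `ℂ[[x,y₁,y₂]]` (series with zero constant term). -/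
def mI : Ideal R3 := RingHom.ker (MvPowerSeries.constantCoeff)

/-- The variables, as power series. -/
def Xv (i : Fin 3) : R3 := MvPowerSeries.X i

/-- Constant power series. -/
def Cc (a : ℂ) : R3 := MvPowerSeries.C a

/-- The matrix of linear coefficients of a triple of power series. -/
def linM (φ : Fin 3 → R3) : Matrix (Fin 3) (Fin 3) ℂ :=
  Matrix.of fun i j => cf (Finsupp.single j 1) (φ i)

/-- `φ` is a formal diffeomorphism: a triple in `𝔪³` with invertible linear part. -/
def IsDiffeo (φ : Fin 3 → R3) : Prop :=
  (∀ i, MvPowerSeries.constantCoeff (φ i) = 0) ∧ IsUnit (linM φ).det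

/-- `φ` is fibered: its first component is the variable `x`. -/
def IsFibered (φ : Fin 3 → R3) : Prop := φ 0 = Xv 0

/-- Pullback (substitution) action: `pb φ f = f(φ 0, φ 1, φ 2)`, written coefficientwise
(the sum below has only finitely many nonzero terms when each `φ i` has zero constant
term, which is the case for formal diffeomorphisms). -/
def pb (φ : Fin 3 → R3) (f : R3) : R3 :=
  mk3 fun k => ∑' m : Fin 3 →₀ ℕ, cf m f * cf k (∏ i : Fin 3, φ i ^ (m i))

/-- `Φ` conjugates `Y` to `Z` (that is, `Z = Φ_*(Y)`): `Φ*(Z(f)) = Y(Φ*(f))` for all `f`. -/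
def Conj (φ Y Z : Fin 3 → R3) : Prop :=
  ∀ f : R3, pb φ (VF Z f) = VF Y (pb φ f)

/-- The power series `c(y₁ y₂)` obtained from a one-variable series `c` by substituting
`v = y₁ y₂`. -/
def csub (c : PowerSeries ℂ) : R3 :=
  mk3 fun m => if m 0 = 0 ∧ m 1 = m 2 then PowerSeries.coeff (m 1) c else 0

/-- Components of the normal form
`x²∂/∂x + (−λ + a₁x + c₁(y₁y₂))y₁∂/∂y₁ + (λ + a₂x + c₂(y₁y₂))y₂∂/∂y₂`. -/
def NF (l a₁ a₂ : ℂ) (c₁ c₂ : PowerSeries ℂ) : Fin 3 → R3 :=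
  ![Xv 0 ^ 2,
    (Cc (-l) + Cc a₁ * Xv 0 + csub c₁) * Xv 1,
    (Cc l + Cc a₂ * Xv 0 + csub c₂) * Xv 2]

/-- Components of a doubly-resonant saddle-node in prepared form
`x²∂/∂x + (−λy₁ + F₁)∂/∂y₁ + (λy₂ + F₂)∂/∂y₂`. -/
def SN (l : ℂ) (F₁ F₂ : R3) : Fin 3 → R3 :=
  ![Xv 0 ^ 2, Cc (-l) * Xv 1 + F₁, Cc l * Xv 2 + F₂]

/-- The residue of the prepared saddle-node with nonlinear parts `F₁, F₂`: the coefficient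
of `x y₁` in `F₁` plus the coefficient of `x y₂` in `F₂`. -/
def resid (F₁ F₂ : R3) : ℂ := cf (e 1 1 0) F₁ + cf (e 1 0 1) F₂

/-- `z` is not a nonpositive rational number. -/
def NotQle0 (z : ℂ) : Prop := ∀ q : ℚ, q ≤ 0 → z ≠ (q : ℂ)

/-- `φ` is transversally symplectic (with respect to `ω = dy₁∧dy₂/x` and `dx`):
it is fibered and `(∂φ₁/∂y₁)(∂φ₂/∂y₂) − (∂φ₁/∂y₂)(∂φ₂/∂y₁) = 1`. -/
def TransSymp (φ : Fin 3 → R3) : Prop :=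
  φ 0 = Xv 0 ∧ pd 1 (φ 1) * pd 2 (φ 2) - pd 2 (φ 1) * pd 1 (φ 2) = 1

/-- `b` depends only on the variable `x`. -/
def OnlyX (b : R3) : Prop := ∀ m : Fin 3 →₀ ℕ, (m 1 ≠ 0 ∨ m 2 ≠ 0) → cf m b = 0

/-- The vector field with components `b` is transversally Hamiltonian (w.r.t.
`ω = dy₁∧dy₂/x` and `dx`): `b 0 ∈ x·ℂ[[x]]` and `x·(∂b₁/∂y₁ + ∂b₂/∂y₂) = b 0`. -/
def TransHam (b : Fin 3 → R3) : Prop :=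
  OnlyX (b 0) ∧ MvPowerSeries.constantCoeff (b 0) = 0 ∧
    Xv 0 * (pd 1 (b 1) + pd 2 (b 2)) = b 0


/-!
Write `v = y₁y₂`. The normal form `Y = NF λ a₁ a₂ (-c) c` splits as `x·E + D ∘ (λ + c(v))`
with `E = x∂ₓ + a₁y₁∂₁ + a₂y₂∂₂` and `D = y₂∂₂ - y₁∂₁`, both diagonal on monomials, while
multiplication by `c(v)` acts on each ray of monomials `x^k y₁^(p+j) y₂^(q+j)` (`p = 0` or
`q = 0`) as multiplication by `c` in `ℂ[[v]]`. Reading `Y g = x g` ray by ray shows that its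
solutions are spanned by `x` and `v`. Since `Z v = x v`, the series `φ₁φ₂` is such a solution;
it has no `x`-term, and its `v`-coefficient is `1` by the symplectic condition, because the
linear part of the conjugacy on `y₁` gives `λγ = -λγ` for the `y₂`-coefficient `γ` of `φ₁`. So
`Φ` fixes `v`, hence `c'(v)`, and `Y φ₁ = (-λ + a₁'x - c'(v)) φ₁`. Its `x y₁`-coefficient gives
`a₁ = a₁'`, and on the ray `y₁ vʲ` it reads `(c - c')·h = 0` with `h(0) = ∂φ₁/∂y₁(0) ≠ 0`.
-/

section

variable {σ R : Type*} [CommSemiring R]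

theorem MvPowerSeries.constantCoeff_pderiv (i : σ) (f : MvPowerSeries σ R) :
    constantCoeff (pderiv R i f) = coeff (Finsupp.single i 1) f := by
  rw [← coeff_zero_eq_constantCoeff_apply, coeff_pderiv]; simp

theorem MvPowerSeries.coeff_X_mul_pderiv [DecidableEq σ] (i : σ) (f : MvPowerSeries σ R)
    (n : σ →₀ ℕ) : coeff n (X i * pderiv R i f) = n i * coeff n f := by
  rw [← pow_one (X i), X_pow_eq, coeff_monomial_mul, one_mul]
  split_ifs with h
  · have hi : 1 ≤ n i := by simpa using h i
    rw [coeff_pderiv, tsub_add_cancel_of_le h, Finsupp.tsub_apply, Finsupp.single_eq_same,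
      ← Nat.cast_add_one, Nat.sub_add_cancel hi, mul_comm]
  · have hi : n i = 0 := by
      by_contra hi; exact h (Finsupp.single_le_iff.2 (Nat.one_le_iff_ne_zero.2 hi))
    simp [hi]

theorem MvPowerSeries.coeff_single_mul_eq_zero (i : σ) {f g : MvPowerSeries σ R}
    (hf : constantCoeff f = 0) (hg : constantCoeff g = 0) :
    coeff (Finsupp.single i 1) (f * g) = 0 := by
  rw [← constantCoeff_pderiv, Derivation.leibniz]; simp [hf, hg]

theorem PowerSeries.coeff_zero_mul (f g : PowerSeries R) :
    coeff 0 (f * g) = coeff 0 f * coeff 0 g := by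
  simp [coeff_zero_eq_constantCoeff_apply]

end

namespace NormalForm

@[simp] lemma e_apply_zero (k p q : ℕ) : e k p q 0 = k := by simp [e]

@[simp] lemma e_apply_one (k p q : ℕ) : e k p q 1 = p := by simp [e]

@[simp] lemma e_apply_two (k p q : ℕ) : e k p q 2 = q := by simp [e]

lemma e_eq_iff {k p q k' p' q' : ℕ} : e k p q = e k' p' q' ↔ k = k' ∧ p = p' ∧ q = q' := by
  refine ⟨fun h => ⟨?_, ?_, ?_⟩, by rintro ⟨rfl, rfl, rfl⟩; rfl⟩ <;>
  [simpa using congr($h 0); simpa using congr($h 1); simpa using congr($h 2)]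

lemma e_add_e (k p q k' p' q' : ℕ) :
    e k p q + e k' p' q' = e (k + k') (p + p') (q + q') := by
  ext i; fin_cases i <;> simp

lemma e_one_zero_zero : e 1 0 0 = Finsupp.single 0 1 := by ext i; fin_cases i <;> simp [e]

lemma e_zero_one_zero : e 0 1 0 = Finsupp.single 1 1 := by ext i; fin_cases i <;> simp [e]

lemma e_zero_zero_one : e 0 0 1 = Finsupp.single 2 1 := by ext i; fin_cases i <;> simp [e]

lemma ext_e {f g : R3} (h : ∀ k p q, cf (e k p q) f = cf (e k p q) g) : f = g := by
  ext m
  have hm : m = e (m 0) (m 1) (m 2) := by ext i; fin_cases i <;> simp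
  rw [hm]; exact h _ _ _

lemma cf_add (m : Fin 3 →₀ ℕ) (f g : R3) : cf m (f + g) = cf m f + cf m g := map_add _ f g

lemma cf_sub (m : Fin 3 →₀ ℕ) (f g : R3) : cf m (f - g) = cf m f - cf m g := map_sub _ f g

lemma cf_Cc_mul (m : Fin 3 →₀ ℕ) (a : ℂ) (f : R3) : cf m (Cc a * f) = a * cf m f :=
  coeff_C_mul m f a

lemma cf_monomial (m n : Fin 3 →₀ ℕ) (a : ℂ) :
    cf m (monomial n a) = if m = n then a else 0 := by
  classical exact coeff_monomial m n a

lemma cf_X0_mul_succ (k p q : ℕ) (f : R3) : cf (e (k + 1) p q) (Xv 0 * f) = cf (e k p q) f := by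
  rw [show e (k + 1) p q = e 1 0 0 + e k p q by rw [e_add_e, add_comm 1 k, zero_add, zero_add],
    e_one_zero_zero, cf, Xv, ← pow_one (X 0), X_pow_eq, coeff_add_monomial_mul, one_mul]
  rfl

lemma cf_X0_mul_zero (p q : ℕ) (f : R3) : cf (e 0 p q) (Xv 0 * f) = 0 := by
  rw [cf, Xv, ← pow_one (X 0), X_pow_eq, coeff_monomial_mul, if_neg]
  intro hle; simpa using hle 0

lemma pd_eq_pderiv (i : Fin 3) (f : R3) : pd i f = pderiv ℂ i f := by
  ext m; rw [coeff_pderiv, mul_comm]; rfl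

lemma pb_eq_subst {φ : Fin 3 → R3} (hφ : ∀ i, constantCoeff (φ i) = 0) (f : R3) :
    pb φ f = subst φ f := by
  have hs := hasSubst_of_constantCoeff_zero hφ
  ext k
  rw [coeff_subst hs, ← tsum_eq_finsum (L := .unconditional _) (coeff_subst_finite hs f k)]
  refine tsum_congr fun m => ?_
  rw [smul_eq_mul, Finsupp.prod_fintype _ _ (fun _ => pow_zero _)]; rfl

lemma subst_Xv {φ : Fin 3 → R3} (hφ : HasSubst φ) (i : Fin 3) : subst φ (Xv i) = φ i :=
  subst_X hφ i

lemma subst_Cc (φ : Fin 3 → R3) (a : ℂ) : subst φ (Cc a) = Cc a := subst_C a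

lemma VF_mul (b : Fin 3 → R3) (f g : R3) : VF b (f * g) = f * VF b g + g * VF b f := by
  simp only [VF, pd_eq_pderiv, Derivation.leibniz, smul_eq_mul, Finset.mul_sum]
  rw [← Finset.sum_add_distrib]; exact Finset.sum_congr rfl fun i _ => by ring

lemma VF_Xv (b : Fin 3 → R3) (i : Fin 3) : VF b (Xv i) = b i := by
  classical
  simp [VF, pd_eq_pderiv, Xv, pderiv_X, Pi.single_apply]

lemma NF_one (l a₁ a₂ : ℂ) (c₁ c₂ : PowerSeries ℂ) :
    NF l a₁ a₂ c₁ c₂ 1 = (Cc (-l) + Cc a₁ * Xv 0 + csub c₁) * Xv 1 := rfl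

lemma csub_neg (c : PowerSeries ℂ) : csub (-c) = -csub c := by
  ext m; simp only [map_neg]; show ite _ _ _ = -ite _ _ _; split_ifs <;> simp

lemma constantCoeff_csub (c : PowerSeries ℂ) :
    constantCoeff (csub c) = PowerSeries.constantCoeff c := by
  rw [← coeff_zero_eq_constantCoeff_apply, ← PowerSeries.coeff_zero_eq_constantCoeff_apply]
  rfl

lemma VF_NF_X1_mul_X2 {l a₁ a₂ : ℂ} (hsum : a₁ + a₂ = 1) (c : PowerSeries ℂ) :
    VF (NF l a₁ a₂ (-c) c) (Xv 1 * Xv 2) = Xv 0 * (Xv 1 * Xv 2) := by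
  have hC : (C a₁ + C a₂ : R3) = 1 := by rw [← map_add, hsum, map_one]
  rw [VF_mul, VF_Xv, VF_Xv]
  simp only [NF, csub_neg, Cc, map_neg, Matrix.cons_val_zero, Matrix.cons_val_one,
    Matrix.cons_val_two, Matrix.head_cons, Matrix.tail_cons]
  linear_combination (Xv 0 * (Xv 1 * Xv 2)) * hC

def eulerDeriv (a₁ a₂ : ℂ) (f : R3) : R3 :=
  Xv 0 * pd 0 f + Cc a₁ * (Xv 1 * pd 1 f) + Cc a₂ * (Xv 2 * pd 2 f)

def weightDeriv (f : R3) : R3 := Xv 2 * pd 2 f - Xv 1 * pd 1 f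

lemma cf_X_mul_pd (i : Fin 3) (m : Fin 3 →₀ ℕ) (f : R3) :
    cf m (Xv i * pd i f) = m i * cf m f := by
  rw [pd_eq_pderiv, cf, Xv, coeff_X_mul_pderiv]; rfl

lemma cf_eulerDeriv (a₁ a₂ : ℂ) (m : Fin 3 →₀ ℕ) (f : R3) :
    cf m (eulerDeriv a₁ a₂ f) = (m 0 + a₁ * m 1 + a₂ * m 2) * cf m f := by
  simp only [eulerDeriv, cf_add, cf_Cc_mul, cf_X_mul_pd]; ring

lemma cf_weightDeriv (m : Fin 3 →₀ ℕ) (f : R3) :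
    cf m (weightDeriv f) = ((m 2 : ℂ) - m 1) * cf m f := by
  rw [weightDeriv, cf_sub, cf_X_mul_pd, cf_X_mul_pd]; ring

lemma weightDeriv_mul (f g : R3) :
    weightDeriv (f * g) = f * weightDeriv g + g * weightDeriv f := by
  simp only [weightDeriv, pd_eq_pderiv, Derivation.leibniz, smul_eq_mul]; ring

lemma weightDeriv_Cc_add_csub (a : ℂ) (c : PowerSeries ℂ) : weightDeriv (Cc a + csub c) = 0 := by
  ext m
  rw [← cf, cf_weightDeriv, cf, map_add, Cc, coeff_C]
  show _ * (_ + ite _ _ _) = 0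
  by_cases hm : m = 0
  · simp [hm]
  · split_ifs with h
    · simp [h.2]
    · simp

lemma VF_NF_eq (l a₁ a₂ : ℂ) (c : PowerSeries ℂ) (f : R3) :
    VF (NF l a₁ a₂ (-c) c) f =
      Xv 0 * eulerDeriv a₁ a₂ f + weightDeriv ((Cc l + csub c) * f) := by
  rw [weightDeriv_mul, weightDeriv_Cc_add_csub]
  simp only [VF, Fin.sum_univ_three, NF, eulerDeriv, weightDeriv, csub_neg, Cc, map_neg,
    Matrix.cons_val_zero, Matrix.cons_val_one, Matrix.cons_val_two, Matrix.head_cons,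
    Matrix.tail_cons]
  ring

/-- The coefficients of `f` on the ray `x^k y₁^(p+j) y₂^(q+j)`, `j ≥ 0`, as a series in
`v = y₁y₂`. -/
def slice (k p q : ℕ) : R3 →ₗ[ℂ] PowerSeries ℂ where
  toFun f := PowerSeries.mk fun j => cf (e k (p + j) (q + j)) f
  map_add' f g := by ext; simp [cf]
  map_smul' a f := by ext; simp [cf]

@[simp] lemma coeff_slice (k p q j : ℕ) (f : R3) :
    PowerSeries.coeff j (slice k p q f) = cf (e k (p + j) (q + j)) f := by
  simp [slice]

lemma slice_Cc_mul (k p q : ℕ) (a : ℂ) (f : R3) :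
    slice k p q (Cc a * f) = PowerSeries.C a * slice k p q f := by
  ext j; simp [cf_Cc_mul]

lemma slice_X0_mul_zero (p q : ℕ) (f : R3) : slice 0 p q (Xv 0 * f) = 0 := by
  ext j; simp [cf_X0_mul_zero]

lemma slice_X0_mul_succ (k p q : ℕ) (f : R3) :
    slice (k + 1) p q (Xv 0 * f) = slice k p q f := by
  ext j; simp [cf_X0_mul_succ]

lemma slice_weightDeriv (k p q : ℕ) (f : R3) :
    slice k p q (weightDeriv f) = ((q : ℂ) - p) • slice k p q f := by
  ext j; simp [cf_weightDeriv]

lemma slice_csub_mul {p q : ℕ} (hpq : p = 0 ∨ q = 0) (k : ℕ) (d : PowerSeries ℂ) (f : R3) :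
    slice k p q (csub d * f) = d * slice k p q f := by
  ext j
  rw [coeff_slice, PowerSeries.coeff_mul, cf, coeff_mul]
  symm
  refine Finset.sum_of_injOn (fun ij => (e 0 ij.1 ij.1, e k (p + ij.2) (q + ij.2))) ?_ ?_ ?_ ?_
  · rintro ⟨i, i'⟩ - ⟨n, n'⟩ - h
    simp only [Prod.mk.injEq, e_eq_iff] at h
    simp only [Prod.mk.injEq]; omega
  · rintro ⟨i, i'⟩ h
    simp only [Finset.mem_coe, Finset.HasAntidiagonal.mem_antidiagonal] at h
    simp only [Finset.mem_coe, Finset.HasAntidiagonal.mem_antidiagonal, e_add_e, e_eq_iff]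
    omega
  -- a factor `y₁ⁱy₂ⁱ` of `x^k y₁^(p+j) y₂^(q+j)` has `i ≤ j`, as `p = 0` or `q = 0`
  · rintro ⟨a, b⟩ hab hne
    simp only [Finset.HasAntidiagonal.mem_antidiagonal] at hab
    show ite _ _ _ * _ = 0
    split_ifs with ha
    · obtain ⟨ha0, ha12⟩ : a 0 = 0 ∧ a 1 = a 2 := ha
      have h0 := congr($hab 0); have h1 := congr($hab 1); have h2 := congr($hab 2)
      simp only [Finsupp.add_apply, e_apply_zero, e_apply_one, e_apply_two] at h0 h1 h2
      refine absurd ⟨(a 1, j - a 1), ?_, ?_⟩ hne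
      · simp only [Finset.mem_coe, Finset.HasAntidiagonal.mem_antidiagonal]; omega
      · refine Prod.ext ?_ ?_ <;> ext i <;> fin_cases i <;> simp <;> omega
    · exact zero_mul _
  · rintro ⟨i, i'⟩ -
    show _ = ite _ _ _ * _
    simp [cf]

lemma slice_Cc_add_Cc_mul_X0_add_mul (k p q : ℕ) (b₀ b : ℂ) (S f : R3) :
    slice k p q ((Cc b₀ + Cc b * Xv 0 + S) * f) =
      PowerSeries.C b₀ * slice k p q f + PowerSeries.C b * slice k p q (Xv 0 * f) +
        slice k p q (S * f) := by
  rw [add_mul, add_mul, mul_assoc, map_add, map_add, slice_Cc_mul, slice_Cc_mul]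

section

variable {l a₁ a₂ : ℂ} {c : PowerSeries ℂ}

lemma slice_VF_NF {p q : ℕ} (hpq : p = 0 ∨ q = 0) (k : ℕ) (f : R3) :
    slice k p q (VF (NF l a₁ a₂ (-c) c) f) = slice k p q (Xv 0 * eulerDeriv a₁ a₂ f) +
      ((q : ℂ) - p) • ((PowerSeries.C l + c) * slice k p q f) := by
  rw [VF_NF_eq, map_add, slice_weightDeriv, add_mul, map_add, slice_Cc_mul,
    slice_csub_mul hpq, add_mul]

lemma slice_eq_zero_of_VF_NF_eq_X0_mul (hl : l ≠ 0) (hc : PowerSeries.constantCoeff c = 0)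
    {g : R3} (hg : VF (NF l a₁ a₂ (-c) c) g = Xv 0 * g) {p q : ℕ} (hne : p ≠ q)
    (hpq : p = 0 ∨ q = 0) (k : ℕ) : slice k p q g = 0 := by
  have hC : PowerSeries.C l + c ≠ 0 := fun h =>
    hl (by simpa [hc] using congr(PowerSeries.constantCoeff $h))
  have hw : (q : ℂ) - p ≠ 0 := sub_ne_zero.2 (by exact_mod_cast hne.symm)
  have key : ∀ k, slice k p q (Xv 0 * eulerDeriv a₁ a₂ g) = slice k p q (Xv 0 * g) →
      slice k p q g = 0 := by
    intro k h
    have := congr(slice k p q $hg)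
    rw [slice_VF_NF hpq, h, add_eq_left, smul_eq_zero, mul_eq_zero] at this
    exact (this.resolve_left hw).resolve_left hC
  induction k with
  | zero => exact key 0 (by rw [slice_X0_mul_zero, slice_X0_mul_zero])
  | succ k ih =>
    refine key _ ?_
    rw [slice_X0_mul_succ, slice_X0_mul_succ, ih]
    ext j
    rw [coeff_slice, cf_eulerDeriv, ← coeff_slice, ih]; simp

lemma cf_diag_eq_zero_of_VF_NF_eq_X0_mul (hsum : a₁ + a₂ = 1) {g : R3}
    (hg : VF (NF l a₁ a₂ (-c) c) g = Xv 0 * g) {k p : ℕ} (hkp : k + p ≠ 1) :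
    cf (e k p p) g = 0 := by
  have h := congr(cf (e (k + 1) p p) $hg)
  rw [VF_NF_eq, cf_add, cf_X0_mul_succ, cf_X0_mul_succ, cf_weightDeriv, cf_eulerDeriv] at h
  simp only [e_apply_zero, e_apply_one, e_apply_two, sub_self, zero_mul, add_zero] at h
  have hcoef : (k : ℂ) + a₁ * p + a₂ * p - 1 ≠ 0 := by
    rw [show (k : ℂ) + a₁ * p + a₂ * p - 1 = ((k + p : ℕ) : ℂ) - (1 : ℕ) by
      push_cast; linear_combination (p : ℂ) * hsum]
    exact sub_ne_zero.2 (by exact_mod_cast hkp)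
  exact (mul_eq_zero.1 (by linear_combination h : _ * cf (e k p p) g = 0)).resolve_left hcoef

theorem eq_of_VF_NF_eq_X0_mul (hl : l ≠ 0) (hc : PowerSeries.constantCoeff c = 0)
    (hsum : a₁ + a₂ = 1) {g : R3} (hg : VF (NF l a₁ a₂ (-c) c) g = Xv 0 * g) :
    g = monomial (e 1 0 0) (cf (e 1 0 0) g) + monomial (e 0 1 1) (cf (e 0 1 1) g) := by
  refine ext_e fun k p q => ?_
  simp only [cf_add, cf_monomial, e_eq_iff]
  by_cases h100 : k = 1 ∧ p = 0 ∧ q = 0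
  · obtain ⟨rfl, rfl, rfl⟩ := h100; simp [cf]
  by_cases h011 : k = 0 ∧ p = 1 ∧ q = 1
  · obtain ⟨rfl, rfl, rfl⟩ := h011; simp [cf]
  rw [if_neg h100, if_neg h011, add_zero]
  rcases eq_or_ne p q with rfl | hne
  · exact cf_diag_eq_zero_of_VF_NF_eq_X0_mul hsum hg (by omega)
  · have := congr(PowerSeries.coeff (min p q) $(slice_eq_zero_of_VF_NF_eq_X0_mul hl hc hg
      (p := p - min p q) (q := q - min p q) (by omega) (by omega) k))
    rwa [coeff_slice, Nat.sub_add_cancel (min_le_left p q),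
      Nat.sub_add_cancel (min_le_right p q), map_zero] at this

lemma cf_e001_eq_zero_of_VF_NF_eq_mul (hl : l ≠ 0) (hc : PowerSeries.constantCoeff c = 0)
    {b : ℂ} {S f : R3} (hS : constantCoeff S = 0) (hf : constantCoeff f = 0)
    (h : VF (NF l a₁ a₂ (-c) c) f = (Cc (-l) + Cc b * Xv 0 + S) * f) :
    cf (e 0 0 1) f = 0 := by
  have hSf : cf (e 0 0 1) (S * f) = 0 := by
    rw [e_zero_zero_one]; exact coeff_single_mul_eq_zero 2 hS hf
  have := congr(PowerSeries.coeff 0 (slice 0 0 1 $h))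
  rw [slice_VF_NF (Or.inl rfl), slice_X0_mul_zero, slice_Cc_add_Cc_mul_X0_add_mul,
    slice_X0_mul_zero] at this
  simp only [map_add, PowerSeries.coeff_zero_mul, PowerSeries.coeff_zero_C, coeff_slice,
    PowerSeries.coeff_zero_eq_constantCoeff_apply c, hc, hSf, add_zero, zero_add, mul_zero,
    Nat.cast_one, Nat.cast_zero, sub_zero, one_smul] at this
  have h2 : (2 * l) * cf (e 0 0 1) f = 0 := by linear_combination this
  exact (mul_eq_zero.1 h2).resolve_left (mul_ne_zero two_ne_zero hl)

lemma eq_of_VF_NF_eq_mul (hc : PowerSeries.constantCoeff c = 0) {a₁' : ℂ} {c' : PowerSeries ℂ}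
    (hc' : PowerSeries.constantCoeff c' = 0) {f : R3} (hf : cf (e 0 1 0) f ≠ 0)
    (h : VF (NF l a₁ a₂ (-c) c) f = (Cc (-l) + Cc a₁' * Xv 0 + csub (-c')) * f) :
    a₁ = a₁' ∧ c = c' := by
  have hslice (k : ℕ) := congr(slice k 1 0 $h)
  simp only [slice_VF_NF (Or.inr rfl), slice_Cc_add_Cc_mul_X0_add_mul, csub_neg, neg_mul,
    map_neg, slice_csub_mul (Or.inr rfl)] at hslice
  constructor
  · have := congr(PowerSeries.coeff 0 $(hslice 1))
    simp only [slice_X0_mul_succ, map_add, map_neg, PowerSeries.coeff_zero_mul,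
      PowerSeries.coeff_zero_C, coeff_slice, PowerSeries.coeff_zero_eq_constantCoeff_apply c, hc,
      PowerSeries.coeff_zero_eq_constantCoeff_apply c', hc', cf_eulerDeriv, e_apply_zero,
      e_apply_one, e_apply_two, add_zero, zero_add, Nat.cast_zero, Nat.cast_one, map_smul,
      smul_eq_mul] at this
    exact sub_eq_zero.1 ((mul_eq_zero.1 (by linear_combination this :
      (a₁ - a₁') * cf (e 0 1 0) f = 0)).resolve_right hf)
  · have hs : slice 0 1 0 f ≠ 0 := fun h0 => hf (by simpa using congr(PowerSeries.coeff 0 $h0))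
    have := hslice 0
    simp only [slice_X0_mul_zero, Nat.cast_zero, Nat.cast_one, zero_sub, neg_one_smul] at this
    exact sub_eq_zero.1 ((mul_eq_zero.1 (by linear_combination -this :
      (c - c') * slice 0 1 0 f = 0)).resolve_right hs)

end

lemma X1_mul_X2_pow (j : ℕ) : (Xv 1 * Xv 2) ^ j = monomial (e 0 j j) 1 := by
  rw [mul_pow, Xv, Xv, X_pow_eq, X_pow_eq, monomial_mul_monomial, one_mul]
  simp [e]

lemma csub_eq_subst (c : PowerSeries ℂ) : csub c = PowerSeries.subst (Xv 1 * Xv 2) c := by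
  have hv : PowerSeries.HasSubst (Xv 1 * Xv 2) :=
    PowerSeries.HasSubst.of_constantCoeff_zero (by simp [Xv])
  ext m
  rw [PowerSeries.coeff_subst hv, finsum_eq_single _ (m 1)]
  · have hm : m = e 0 (m 1) (m 1) ↔ m 0 = 0 ∧ m 1 = m 2 := by
      refine ⟨fun h => ?_, fun ⟨h0, h12⟩ => ?_⟩
      · rw [h]; simp
      · ext i; fin_cases i <;> simp [h0, h12]
    rw [X1_mul_X2_pow, coeff_monomial, smul_eq_mul]
    simp only [hm]
    show ite _ _ _ = _
    split_ifs <;> simp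
  · intro d hd
    rw [X1_mul_X2_pow, coeff_monomial, if_neg (fun h => hd (by simpa using congr($h 1).symm)),
      smul_zero]

lemma subst_csub {φ : Fin 3 → R3} (hφ : ∀ i, constantCoeff (φ i) = 0)
    (h12 : φ 1 * φ 2 = Xv 1 * Xv 2) (c : PowerSeries ℂ) : subst φ (csub c) = csub c := by
  have hs := hasSubst_of_constantCoeff_zero hφ
  have hv : PowerSeries.HasSubst (Xv 1 * Xv 2) :=
    PowerSeries.HasSubst.of_constantCoeff_zero (by simp [Xv])
  rw [csub_eq_subst, PowerSeries.subst, subst_comp_subst_apply hv.const hs]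
  simp only [subst_mul hs, Xv, subst_X hs]
  exact congr(subst (fun _ : Unit => $h12) c)

lemma cf_e011_mul {f g : R3} (hf : constantCoeff f = 0) (hg : constantCoeff g = 0) :
    cf (e 0 1 1) (f * g) =
      cf (e 0 1 0) f * cf (e 0 0 1) g + cf (e 0 0 1) f * cf (e 0 1 0) g := by
  have h011 (h : R3) : cf (e 0 1 1) h = constantCoeff (pderiv ℂ 1 (pderiv ℂ 2 h)) := by
    rw [constantCoeff_pderiv, coeff_pderiv, ← e_zero_one_zero, ← e_zero_zero_one, e_add_e]
    simp [cf]
  simp only [h011, Derivation.leibniz, map_add, smul_eq_mul, map_mul, hf, hg,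
    constantCoeff_pderiv, ← e_zero_one_zero, ← e_zero_zero_one]
  simp only [cf]; ring

lemma TransSymp.linear_det {φ : Fin 3 → R3} (hs : TransSymp φ) :
    cf (e 0 1 0) (φ 1) * cf (e 0 0 1) (φ 2) - cf (e 0 0 1) (φ 1) * cf (e 0 1 0) (φ 2) = 1 := by
  simpa only [cf, pd_eq_pderiv, map_sub, map_mul, map_one, constantCoeff_pderiv,
    e_zero_one_zero, e_zero_zero_one] using congr(constantCoeff $(hs.2))

end NormalForm

open NormalForm in
/-- **Uniqueness of the transversally Hamiltonian normal form** with respect to the action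
of transversally symplectic formal diffeomorphisms. -/
theorem trans_hamiltonian_normal_form_unique
    (l a₁ a₂ a₁' a₂' : ℂ) (hl : l ≠ 0) (hsum : a₁ + a₂ = 1) (hsum' : a₁' + a₂' = 1)
    (c c' : PowerSeries ℂ)
    (hc : PowerSeries.constantCoeff c = 0) (hc' : PowerSeries.constantCoeff c' = 0)
    (φ : Fin 3 → R3) (hd : IsDiffeo φ) (hs : TransSymp φ)
    (hconj : Conj φ (NF l a₁ a₂ (-c) c) (NF l a₁' a₂' (-c') c')) :
    a₁ = a₁' ∧ a₂ = a₂' ∧ c = c' := by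
  have hφ := hd.1
  have hsub := hasSubst_of_constantCoeff_zero hφ
  have hconj' (f : R3) : VF (NF l a₁ a₂ (-c) c) (subst φ f) =
      subst φ (VF (NF l a₁' a₂' (-c') c') f) := by
    rw [← pb_eq_subst hφ, ← pb_eq_subst hφ, hconj]
  have hv : VF (NF l a₁ a₂ (-c) c) (φ 1 * φ 2) = Xv 0 * (φ 1 * φ 2) := by
    rw [← subst_Xv hsub 1, ← subst_Xv hsub 2, ← subst_mul hsub, hconj', VF_NF_X1_mul_X2 hsum',
      subst_mul hsub, subst_mul hsub, subst_Xv hsub, subst_Xv hsub, subst_Xv hsub, hs.1]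
  have h1 : VF (NF l a₁ a₂ (-c) c) (φ 1) =
      (Cc (-l) + Cc a₁' * Xv 0 + subst φ (csub (-c'))) * φ 1 := by
    rw [← subst_Xv hsub 1, hconj', VF_Xv, NF_one, subst_mul hsub, subst_add hsub, subst_add hsub,
      subst_mul hsub, subst_Cc, subst_Cc, subst_Xv hsub, subst_Xv hsub, hs.1]
  have hγ := cf_e001_eq_zero_of_VF_NF_eq_mul hl hc
    (constantCoeff_subst_eq_zero hsub hφ (by rw [constantCoeff_csub, map_neg, hc', neg_zero]))
    (hφ 1) h1
  have hβδ := hs.linear_det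
  rw [hγ, zero_mul, sub_zero] at hβδ
  have h12 : φ 1 * φ 2 = Xv 1 * Xv 2 := by
    rw [eq_of_VF_NF_eq_X0_mul hl hc hsum hv, e_one_zero_zero, cf,
      coeff_single_mul_eq_zero 0 (hφ 1) (hφ 2), cf_e011_mul (hφ 1) (hφ 2), hγ, hβδ, zero_mul,
      add_zero, map_zero, zero_add, ← X1_mul_X2_pow 1, pow_one]
  rw [subst_csub hφ h12] at h1
  obtain ⟨rfl, rfl⟩ := eq_of_VF_NF_eq_mul hc hc' (left_ne_zero_of_mul_eq_one hβδ) h1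
  exact ⟨rfl, by linear_combination hsum - hsum', rfl⟩

end
end

section
/- (i) For every formal diffeomorphism Φ of ℂ[[x₁,…,xₙ]] there exists a unique singular formal vector field F with F(𝔪) ⊆ 𝔪² such that Φ = φ ∘ exp(F), where φ is the linear diffeomorphism determined by the Jacobian matrix of Φ at 0. (ii) For each k ≥ 2, the exponential map X ↦ exp(X) is a bijection from the set of singular formal vector fields X with X(𝔪) ⊆ 𝔪^k onto the set of formal diffeomorphisms Φ with Φ(xᵢ) − xᵢ ∈ 𝔪^k for all i = 1,…,n. -/
open MvPowerSeries

noncomputable section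

/-- `Rn n` is the ring `ℂ[[x₁,…,xₙ]]` of formal power series in `n` variables. -/
abbrev Rn (n : ℕ) : Type := MvPowerSeries (Fin n) ℂ

/-- Build a formal power series from its coefficient function. -/
def mkn {n : ℕ} (g : (Fin n →₀ ℕ) → ℂ) : Rn n := g

/-- Coefficient of the monomial with exponents `m`. -/
def cfn {n : ℕ} (m : Fin n →₀ ℕ) (f : Rn n) : ℂ := MvPowerSeries.coeff (R := ℂ) m f

/-- Formal partial derivative with respect to the `i`-th variable. -/
def pdn {n : ℕ} (i : Fin n) (f : Rn n) : Rn n :=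
  mkn fun m => ((m i : ℂ) + 1) * cfn (m + Finsupp.single i 1) f

/-- The formal vector field (derivation) with components `b`, `∑ i, b i · ∂/∂xᵢ`. -/
def VFn {n : ℕ} (b : Fin n → Rn n) (f : Rn n) : Rn n := ∑ i, b i * pdn i f

/-- The maximal ideal `𝔪` of `ℂ[[x₁,…,xₙ]]`. -/
def mIn (n : ℕ) : Ideal (Rn n) := RingHom.ker (MvPowerSeries.constantCoeff (σ := Fin n) (R := ℂ))

/-- The variables. -/
def Xn {n : ℕ} (i : Fin n) : Rn n := MvPowerSeries.X i

/-- The exponential `exp(D)` of an operator, as the algebra map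
`f ↦ ∑_{k≥0} D^{∘k}(f)/k!`, defined coefficientwise (the inner series has only finitely
many nonzero terms when `D` is a singular vector field with `D(𝔪) ⊆ 𝔪²`). -/
def expD {n : ℕ} (D : Rn n → Rn n) (f : Rn n) : Rn n :=
  mkn fun m => ∑' k : ℕ, ((k.factorial : ℂ))⁻¹ * cfn m (D^[k] f)

/-- The adjoint operator `ad_X(D) = X ∘ D − D ∘ X`. -/
def adOp {n : ℕ} (X : Rn n → Rn n) (D : Rn n → Rn n) : Rn n → Rn n :=
  fun f => X (D f) - D (X f)

/-- Matrix of linear coefficients of a tuple of power series. -/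
def linMn {n : ℕ} (φ : Fin n → Rn n) : Matrix (Fin n) (Fin n) ℂ :=
  Matrix.of fun i j => cfn (Finsupp.single j 1) (φ i)

/-- `φ` is a formal diffeomorphism. -/
def IsDiffeoN {n : ℕ} (φ : Fin n → Rn n) : Prop :=
  (∀ i, MvPowerSeries.constantCoeff (σ := Fin n) (R := ℂ) (φ i) = 0) ∧ IsUnit (linMn φ).det

/-!
Membership in `𝔪 ^ d` means that all coefficients of degree `< d` vanish (greedy division by
the variables). If `F` and `G` have components in `𝔪²` and `F - G` has components in `𝔪^(d+1)`,
then `exp(F)*(xᵢ) - exp(G)*(xᵢ) ≡ Fᵢ - Gᵢ mod 𝔪^(d+2)`: the terms `X^{∘j}(xᵢ)/j!` with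
`j ≥ 2` of the two exponential series agree modulo `𝔪^(d+2)`. This gives injectivity of `exp` at
once, and surjectivity through the iteration `F_{t+1} = F_t + (ψ - exp(F_t))`, whose error gains
one order at each step and whose `𝔪`-adic limit is the logarithm of `ψ`. Part (i) is part (ii)
with `k = 2` applied to `Φ` composed with the inverse of its Jacobian matrix.
-/

theorem Finsupp.exists_eq_single_of_degree_eq_one {σ : Type*} {m : σ →₀ ℕ} (h : m.degree = 1) :
    ∃ j, m = Finsupp.single j 1 := by
  obtain ⟨j, hj⟩ : ∃ j, m j ≠ 0 := by
    by_contra! hm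
    rw [show m = 0 from Finsupp.ext hm, map_zero] at h
    exact zero_ne_one h
  obtain ⟨r, rfl⟩ :=
    le_iff_exists_add.mp (Finsupp.single_le_iff.mpr (Nat.one_le_iff_ne_zero.mpr hj))
  rw [map_add, Finsupp.degree_single] at h
  exact ⟨j, by rw [(Finsupp.degree_eq_zero_iff r).mp (by omega), add_zero]⟩

namespace MvPowerSeries

open Finsupp

variable {σ R : Type*}

local notation "𝔪" => RingHom.ker (constantCoeff (σ := σ) (R := R))

section Semiring

variable [CommSemiring R]

theorem le_order_of_mem_ker_pow {d : ℕ} {f : MvPowerSeries σ R} (hf : f ∈ 𝔪 ^ d) :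
    (d : ℕ∞) ≤ f.order := by
  induction d generalizing f with
  | zero => simp
  | succ d ih =>
    rw [pow_succ] at hf
    refine Submodule.mul_induction_on hf (fun a ha b hb => ?_) (fun a b ha hb => ?_)
    · have hb : 1 ≤ b.order := one_le_order_iff_constCoeff_eq_zero.mpr hb
      calc ((d + 1 : ℕ) : ℕ∞) = d + 1 := by push_cast; rfl
        _ ≤ a.order + b.order := add_le_add (ih ha) hb
        _ ≤ (a * b).order := le_order_mul
    · exact le_trans (le_min ha hb) min_order_le_add

section DivisionByVariables

variable [LinearOrder σ]

/-- `X i * divX i f` is the part of `f` on the monomials whose smallest variable is `i`. -/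
def divX (i : σ) (f : MvPowerSeries σ R) : MvPowerSeries σ R :=
  fun m => if (m + single i 1).support.min = (i : WithTop σ) then coeff (m + single i 1) f else 0

theorem coeff_X_mul_divX (i : σ) (f : MvPowerSeries σ R) (m : σ →₀ ℕ) :
    coeff m (X i * divX i f) = if m.support.min = (i : WithTop σ) then coeff m f else 0 := by
  classical
  rw [X, coeff_monomial_mul, one_mul]
  split_ifs with hle hmin hmin
  · rw [coeff_apply, divX, tsub_add_cancel_of_le hle, if_pos hmin]
  · rw [coeff_apply, divX, tsub_add_cancel_of_le hle, if_neg hmin]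
  · refine absurd (single_le_iff.mpr ?_) hle
    exact Nat.one_le_iff_ne_zero.mpr (mem_support_iff.mp (Finset.mem_of_min hmin))
  · rfl

theorem sum_X_mul_divX [Fintype σ] {f : MvPowerSeries σ R} (hf : constantCoeff f = 0) :
    ∑ i, X i * divX i f = f := by
  ext m
  simp only [map_sum, coeff_X_mul_divX]
  cases hm : m.support.min with
  | top =>
    rw [Finset.min_eq_top, support_eq_empty] at hm
    simp [hm, hf]
  | coe i => simp [WithTop.coe_inj]

theorem le_order_divX {d : ℕ} {f : MvPowerSeries σ R} (hf : ((d + 1 : ℕ) : ℕ∞) ≤ f.order)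
    (i : σ) : (d : ℕ∞) ≤ (divX i f).order := by
  refine nat_le_order fun m hm => ?_
  rw [coeff_apply, divX]
  split_ifs
  · exact coeff_of_lt_order (lt_of_lt_of_le (by simpa using hm) hf)
  · rfl

end DivisionByVariables

theorem mem_ker_pow_of_le_order [Fintype σ] {d : ℕ} {f : MvPowerSeries σ R}
    (hf : (d : ℕ∞) ≤ f.order) : f ∈ 𝔪 ^ d := by
  let : LinearOrder σ := LinearOrder.lift' _ (Fintype.equivFin σ).injective
  induction d generalizing f with
  | zero => simp
  | succ d ih =>
    have h0 : constantCoeff f = 0 :=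
      one_le_order_iff_constCoeff_eq_zero.mp (le_trans (by simp) hf)
    rw [← sum_X_mul_divX h0, pow_succ']
    exact Ideal.sum_mem _ fun i _ =>
      Ideal.mul_mem_mul (constantCoeff_X i) (ih (le_order_divX hf i))

theorem mem_ker_pow_iff [Fintype σ] {d : ℕ} {f : MvPowerSeries σ R} :
    f ∈ 𝔪 ^ d ↔ ∀ m : σ →₀ ℕ, m.degree < d → coeff m f = 0 :=
  ⟨fun hf _ hm => coeff_of_lt_order (lt_of_lt_of_le (by exact_mod_cast hm)
    (le_order_of_mem_ker_pow hf)), fun h => mem_ker_pow_of_le_order (nat_le_order h)⟩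

end Semiring

section Ring

variable [CommRing R] [Fintype σ]

theorem coeff_eq_of_sub_mem_ker_pow {f g : MvPowerSeries σ R} {d : ℕ} (h : f - g ∈ 𝔪 ^ d)
    {m : σ →₀ ℕ} (hm : m.degree < d) : coeff m f = coeff m g :=
  sub_eq_zero.mp (by rw [← map_sub]; exact mem_ker_pow_iff.mp h m hm)

theorem eq_of_forall_sub_mem_ker_pow {f g : MvPowerSeries σ R} (h : ∀ d, f - g ∈ 𝔪 ^ d) :
    f = g := by
  ext m
  exact coeff_eq_of_sub_mem_ker_pow (h (m.degree + 1)) (Nat.lt_succ_self _)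

theorem sub_mem_ker_pow_two_iff {f g : MvPowerSeries σ R} :
    f - g ∈ 𝔪 ^ 2 ↔ constantCoeff f = constantCoeff g ∧
      ∀ j, coeff (single j 1) f = coeff (single j 1) g := by
  refine ⟨fun h => ⟨?_, fun j => coeff_eq_of_sub_mem_ker_pow h (by simp)⟩, fun ⟨h0, h1⟩ => ?_⟩
  · simpa [coeff_zero_eq_constantCoeff_apply] using
      coeff_eq_of_sub_mem_ker_pow h (m := 0) (by simp)
  refine mem_ker_pow_iff.mpr fun m hm => ?_
  rw [map_sub, sub_eq_zero]
  rcases (by omega : m.degree = 0 ∨ m.degree = 1) with hm | hm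
  · rw [(degree_eq_zero_iff m).mp hm, coeff_zero_eq_constantCoeff_apply,
      coeff_zero_eq_constantCoeff_apply, h0]
  · obtain ⟨j, rfl⟩ := exists_eq_single_of_degree_eq_one hm
    exact h1 j

theorem exists_forall_sub_mem_ker_pow (s : ℕ → MvPowerSeries σ R)
    (hs : ∀ t, s (t + 1) - s t ∈ 𝔪 ^ t) : ∃ L, ∀ t, L - s t ∈ 𝔪 ^ t := by
  have hcauchy : ∀ a b, a ≤ b → s b - s a ∈ 𝔪 ^ a := by
    intro a b hab
    induction b, hab using Nat.le_induction with
    | base => simp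
    | succ b hab ih =>
      rw [← sub_add_sub_cancel]
      exact add_mem (Ideal.pow_le_pow_right hab (hs b)) ih
  have hcoeff : ∀ m a b, m.degree < a → m.degree < b → coeff m (s a) = coeff m (s b) := by
    intro m a b ha hb
    rcases le_total a b with hab | hab
    · exact (coeff_eq_of_sub_mem_ker_pow (hcauchy a b hab) ha).symm
    · exact coeff_eq_of_sub_mem_ker_pow (hcauchy b a hab) hb
  let L : MvPowerSeries σ R := fun m => coeff m (s (m.degree + 1))
  refine ⟨L, fun t => mem_ker_pow_iff.mpr fun m hm => ?_⟩
  rw [map_sub, sub_eq_zero]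
  exact hcoeff m _ t (Nat.lt_succ_self _) hm

end Ring

end MvPowerSeries

theorem Derivation.map_mem_pow_of_mem_pow_succ {R A : Type*} [CommSemiring R] [CommRing A]
    [Algebra R A] (D : Derivation R A A) (I : Ideal A) {d : ℕ} {x : A} (hx : x ∈ I ^ (d + 1)) :
    D x ∈ I ^ d := by
  induction d generalizing x with
  | zero => simp
  | succ d ih =>
    rw [pow_succ] at hx
    refine Submodule.mul_induction_on hx (fun a ha b hb => ?_) (fun a b ha hb => ?_)
    · rw [Derivation.leibniz, smul_eq_mul, smul_eq_mul]
      refine add_mem (Ideal.mul_mem_right _ _ ha) ?_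
      rw [pow_succ']
      exact Ideal.mul_mem_mul hb (ih ha)
    · rw [map_add]; exact add_mem ha hb

open MvPowerSeries Finsupp
open scoped Matrix

section VectorFields

variable {n : ℕ}

theorem pdn_eq_pderiv (i : Fin n) (f : Rn n) : pdn i f = pderiv ℂ i f := by
  ext m
  rw [coeff_pderiv, mul_comm]
  rfl

theorem VFn_apply (F : Fin n → Rn n) (f : Rn n) : VFn F f = ∑ i, F i * pderiv ℂ i f := by
  simp only [VFn, pdn_eq_pderiv]

theorem VFn_X (F : Fin n → Rn n) (i : Fin n) : VFn F (Xn i) = F i := by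
  classical
  simp [VFn_apply, Xn, pderiv_X, Pi.single_apply]

theorem VFn_zero (f : Rn n) : VFn 0 f = 0 := by
  simp [VFn_apply]

theorem VFn_apply_sub (F : Fin n → Rn n) (f g : Rn n) :
    VFn F (f - g) = VFn F f - VFn F g := by
  simp only [VFn_apply, map_sub, mul_sub, Finset.sum_sub_distrib]

theorem VFn_sub_VFn (F G : Fin n → Rn n) (f : Rn n) : VFn F f - VFn G f = VFn (F - G) f := by
  simp only [VFn_apply, Pi.sub_apply, sub_mul, Finset.sum_sub_distrib]

theorem VFn_mem_pow {F : Fin n → Rn n} {f : Rn n} {k d : ℕ} (hF : ∀ i, F i ∈ mIn n ^ k)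
    (hf : f ∈ mIn n ^ (d + 1)) : VFn F f ∈ mIn n ^ (k + d) := by
  rw [VFn_apply, pow_add]
  exact Ideal.sum_mem _ fun i _ =>
    Ideal.mul_mem_mul (hF i) ((pderiv ℂ i).map_mem_pow_of_mem_pow_succ _ hf)

variable {F G : Fin n → Rn n} {f : Rn n}

theorem iterate_VFn_mem_pow (hF : ∀ i, F i ∈ mIn n ^ 2) (hf : f ∈ mIn n) (j : ℕ) :
    (VFn F)^[j] f ∈ mIn n ^ (j + 1) := by
  induction j with
  | zero => simpa using hf
  | succ j ih =>
    rw [Function.iterate_succ_apply', show j + 1 + 1 = 2 + j by ring]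
    exact VFn_mem_pow hF ih

theorem iterate_VFn_sub_mem_pow (hF : ∀ i, F i ∈ mIn n ^ 2) (hG : ∀ i, G i ∈ mIn n ^ 2) {d : ℕ}
    (hFG : ∀ i, F i - G i ∈ mIn n ^ (d + 1)) (hf : f ∈ mIn n) (j : ℕ) :
    (VFn F)^[j + 1] f - (VFn G)^[j + 1] f ∈ mIn n ^ (d + j + 1) := by
  induction j with
  | zero =>
    rw [Function.iterate_one, Function.iterate_one, VFn_sub_VFn]
    exact VFn_mem_pow (k := d + 1) (d := 0) hFG (by simpa using hf)
  | succ j ih =>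
    rw [Function.iterate_succ_apply' (VFn F) (j + 1), Function.iterate_succ_apply' (VFn G) (j + 1)]
    set A := (VFn F)^[j + 1] f
    set B := (VFn G)^[j + 1] f
    have hsplit : VFn F A - VFn G B = VFn F (A - B) + VFn (F - G) B := by
      rw [VFn_apply_sub, ← VFn_sub_VFn]
      ring
    rw [hsplit]
    refine add_mem ?_ ?_
    · rw [show d + (j + 1) + 1 = 2 + (d + j) by ring]
      exact VFn_mem_pow hF ih
    · rw [show d + (j + 1) + 1 = (d + 1) + (j + 1) by ring]
      exact VFn_mem_pow hFG (iterate_VFn_mem_pow hG hf (j + 1))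

end VectorFields

section Exponential

variable {n : ℕ}

theorem coeff_expD {D : Rn n → Rn n} {f : Rn n} (hD : ∀ j, D^[j] f ∈ mIn n ^ (j + 1))
    {m : Fin n →₀ ℕ} {N : ℕ} (hN : m.degree < N) :
    coeff m (expD D f) = ∑ j ∈ Finset.range N, (j.factorial : ℂ)⁻¹ * coeff m (D^[j] f) :=
  tsum_eq_sum fun j hj =>
    mul_eq_zero_of_right _ (mem_ker_pow_iff.mp (hD j) m (by simp at hj; omega))

theorem expD_sub_expD_sub_mem {D D' : Rn n → Rn n} {f : Rn n} {d : ℕ}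
    (hD : ∀ j, D^[j] f ∈ mIn n ^ (j + 1)) (hD' : ∀ j, D'^[j] f ∈ mIn n ^ (j + 1))
    (h : ∀ j, D^[j + 2] f - D'^[j + 2] f ∈ mIn n ^ d) :
    expD D f - expD D' f - (D f - D' f) ∈ mIn n ^ d := by
  refine mem_ker_pow_iff.mpr fun m hm => ?_
  have hN : m.degree < m.degree + 2 := by omega
  have hhigh : ∀ j, coeff m (D^[j + 2] f) = coeff m (D'^[j + 2] f) := fun j =>
    coeff_eq_of_sub_mem_ker_pow (h j) hm
  simp only [map_sub, coeff_expD hD hN, coeff_expD hD' hN, Finset.sum_range_succ', hhigh,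
    zero_add, Function.iterate_zero_apply, Function.iterate_one]
  ring

def expMap (F : Fin n → Rn n) : Fin n → Rn n := fun i => expD (VFn F) (Xn i)

theorem expMap_zero (i : Fin n) : expMap 0 i = Xn i := by
  have hD : ∀ j, (VFn (0 : Fin n → Rn n))^[j] (Xn i) ∈ mIn n ^ (j + 1) :=
    iterate_VFn_mem_pow (fun _ => zero_mem _) (constantCoeff_X i)
  ext m
  rw [expMap, coeff_expD hD (Nat.lt_succ_self _), Finset.sum_range_succ']
  simp [Function.iterate_succ_apply', VFn_zero]

variable {F G : Fin n → Rn n}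

theorem expMap_sub_expMap_sub_mem (hF : ∀ i, F i ∈ mIn n ^ 2) (hG : ∀ i, G i ∈ mIn n ^ 2)
    {d : ℕ} (hFG : ∀ i, F i - G i ∈ mIn n ^ (d + 1)) (i : Fin n) :
    expMap F i - expMap G i - (F i - G i) ∈ mIn n ^ (d + 2) := by
  have hX : Xn i ∈ mIn n := constantCoeff_X i
  have h := expD_sub_expD_sub_mem (d := d + 2) (iterate_VFn_mem_pow hF hX)
    (iterate_VFn_mem_pow hG hX) fun j =>
      Ideal.pow_le_pow_right (by omega) (iterate_VFn_sub_mem_pow hF hG hFG hX (j + 1))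
  rwa [VFn_X, VFn_X] at h

theorem expMap_sub_Xn_mem {k : ℕ} (hk : 2 ≤ k) (hF : ∀ i, F i ∈ mIn n ^ k) (i : Fin n) :
    expMap F i - Xn i ∈ mIn n ^ k := by
  have hF2 : ∀ i, F i ∈ mIn n ^ 2 := fun i => Ideal.pow_le_pow_right hk (hF i)
  have h := expMap_sub_expMap_sub_mem (G := 0) (d := k - 1) hF2 (fun _ => zero_mem _)
    (fun i => by rw [Pi.zero_apply, sub_zero, Nat.sub_add_cancel (by omega)]; exact hF i) i
  rw [expMap_zero, Pi.zero_apply, sub_zero] at h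
  simpa using add_mem (Ideal.pow_le_pow_right (by omega) h) (hF i)

end Exponential

section Bijection

variable {n : ℕ}

theorem expMap_injOn : Set.InjOn expMap {F : Fin n → Rn n | ∀ i, F i ∈ mIn n ^ 2} := by
  intro F hF G hG hFG
  have hclose : ∀ d i, F i - G i ∈ mIn n ^ (d + 1) := by
    intro d
    induction d with
    | zero =>
      exact fun i => Ideal.pow_le_pow_right (show 1 ≤ 2 by norm_num) (sub_mem (hF i) (hG i))
    | succ d ih =>
      intro i
      have h := expMap_sub_expMap_sub_mem hF hG ih i
      rwa [hFG, sub_self, zero_sub, neg_mem_iff] at h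
  funext i
  exact eq_of_forall_sub_mem_ker_pow fun d =>
    Ideal.pow_le_pow_right (Nat.le_succ d) (hclose d i)

def logApprox (ψ : Fin n → Rn n) : ℕ → Fin n → Rn n
  | 0 => 0
  | t + 1 => logApprox ψ t + (ψ - expMap (logApprox ψ t))

theorem logApprox_succ_sub (ψ : Fin n → Rn n) (t : ℕ) (i : Fin n) :
    logApprox ψ (t + 1) i - logApprox ψ t i = ψ i - expMap (logApprox ψ t) i := by
  simp [logApprox]

variable {k : ℕ} {ψ : Fin n → Rn n}

theorem logApprox_mem_and_sub_mem (hk : 2 ≤ k) (hψ : ∀ i, ψ i - Xn i ∈ mIn n ^ k) (t : ℕ) :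
    (∀ i, logApprox ψ t i ∈ mIn n ^ k) ∧
      ∀ i, ψ i - expMap (logApprox ψ t) i ∈ mIn n ^ (k + t) := by
  induction t with
  | zero => exact ⟨fun _ => zero_mem _, fun i => by simpa [logApprox, expMap_zero] using hψ i⟩
  | succ t ih =>
    obtain ⟨hF, hres⟩ := ih
    have hF' : ∀ i, logApprox ψ (t + 1) i ∈ mIn n ^ k := fun i => by
      rw [← sub_add_cancel (logApprox ψ (t + 1) i) (logApprox ψ t i), logApprox_succ_sub]
      exact add_mem (Ideal.pow_le_pow_right (by omega) (hres i)) (hF i)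
    refine ⟨hF', fun i => ?_⟩
    have hstep := expMap_sub_expMap_sub_mem (d := k + t - 1)
      (fun i => Ideal.pow_le_pow_right hk (hF' i)) (fun i => Ideal.pow_le_pow_right hk (hF i))
      (fun i => by rw [logApprox_succ_sub]; exact Ideal.pow_le_pow_right (by omega) (hres i)) i
    rw [logApprox_succ_sub] at hstep
    have hsplit : ψ i - expMap (logApprox ψ (t + 1)) i = -(expMap (logApprox ψ (t + 1)) i -
        expMap (logApprox ψ t) i - (ψ i - expMap (logApprox ψ t) i)) := by ring
    rw [hsplit]
    exact neg_mem (Ideal.pow_le_pow_right (by omega) hstep)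

theorem expMap_surjOn (hk : 2 ≤ k) :
    Set.SurjOn expMap {F : Fin n → Rn n | ∀ i, F i ∈ mIn n ^ k}
      {ψ | ∀ i, ψ i - Xn i ∈ mIn n ^ k} := by
  intro ψ hψ
  have happrox := logApprox_mem_and_sub_mem hk hψ
  choose L hL using fun i => exists_forall_sub_mem_ker_pow (fun t => logApprox ψ t i) fun t => by
    rw [logApprox_succ_sub]
    exact Ideal.pow_le_pow_right (by omega) ((happrox t).2 i)
  have hLk : ∀ i, L i ∈ mIn n ^ k := fun i => by
    have h := add_mem (hL i k) ((happrox k).1 i)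
    rwa [sub_add_cancel] at h
  refine ⟨L, hLk, funext fun i => eq_of_forall_sub_mem_ker_pow fun N => ?_⟩
  set F := logApprox ψ (N + 1)
  have hlip := expMap_sub_expMap_sub_mem (d := N) (fun i => Ideal.pow_le_pow_right hk (hLk i))
    (fun i => Ideal.pow_le_pow_right hk ((happrox (N + 1)).1 i)) (fun i => hL i (N + 1)) i
  have hsplit : expMap L i - ψ i =
      (expMap L i - expMap F i - (L i - F i)) + (L i - F i) - (ψ i - expMap F i) := by ring
  rw [hsplit]
  exact sub_mem (add_mem (Ideal.pow_le_pow_right (by omega) hlip)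
    (Ideal.pow_le_pow_right (by omega) (hL i (N + 1))))
    (Ideal.pow_le_pow_right (by omega) ((happrox (N + 1)).2 i))

theorem expMap_bijOn (hk : 2 ≤ k) :
    Set.BijOn expMap {F : Fin n → Rn n | ∀ i, F i ∈ mIn n ^ k}
      {ψ | ∀ i, ψ i - Xn i ∈ mIn n ^ k} :=
  ⟨fun _ hF => expMap_sub_Xn_mem hk hF,
    expMap_injOn.mono fun _ hF i => Ideal.pow_le_pow_right hk (hF i), expMap_surjOn hk⟩

end Bijection

theorem Matrix.eq_mulVec_iff_of_mul_eq_one {m α : Type*} [Fintype m] [DecidableEq m] [CommRing α]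
    {A B : Matrix m m α} (hAB : A * B = 1) (hBA : B * A = 1) {u v : m → α} :
    u = A *ᵥ v ↔ v = B *ᵥ u :=
  ⟨fun h => by rw [h, mulVec_mulVec, hBA, one_mulVec],
    fun h => by rw [h, mulVec_mulVec, hAB, one_mulVec]⟩

section Diffeomorphisms

variable {n : ℕ}

theorem sub_Xn_mem_pow_two_iff {ψ : Fin n → Rn n} :
    (∀ i, ψ i - Xn i ∈ mIn n ^ 2) ↔ (∀ i, constantCoeff (ψ i) = 0) ∧ linMn ψ = 1 := by
  classical
  have key : ∀ i, ψ i - Xn i ∈ mIn n ^ 2 ↔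
      constantCoeff (ψ i) = 0 ∧ ∀ j, linMn ψ i j = (1 : Matrix (Fin n) (Fin n) ℂ) i j := by
    intro i
    refine sub_mem_ker_pow_two_iff.trans ?_
    simp [Xn, constantCoeff_X, coeff_X, linMn, cfn, Matrix.one_apply, single_left_inj, eq_comm]
  simp only [key, forall_and, ← Matrix.ext_iff]

theorem isDiffeoN_of_sub_Xn_mem {ψ : Fin n → Rn n} (h : ∀ i, ψ i - Xn i ∈ mIn n ^ 2) :
    IsDiffeoN ψ := by
  obtain ⟨h0, h1⟩ := sub_Xn_mem_pow_two_iff.mp h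
  exact ⟨h0, by rw [h1, Matrix.det_one]; exact isUnit_one⟩

theorem linMn_mulVec (A : Matrix (Fin n) (Fin n) ℂ) (φ : Fin n → Rn n) :
    linMn (C.mapMatrix A *ᵥ φ) = A * linMn φ := by
  ext i j
  simp [linMn, cfn, Matrix.mulVec, dotProduct, Matrix.mul_apply]

theorem constantCoeff_mulVec (A : Matrix (Fin n) (Fin n) ℂ) (φ : Fin n → Rn n) (i : Fin n) :
    constantCoeff ((C.mapMatrix A *ᵥ φ) i) = (A *ᵥ fun j => constantCoeff (φ j)) i := by
  simp [Matrix.mulVec, dotProduct]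

theorem inv_linMn_mulVec_sub_Xn_mem {φ : Fin n → Rn n} (hφ : IsDiffeoN φ) (i : Fin n) :
    (C.mapMatrix (linMn φ)⁻¹ *ᵥ φ) i - Xn i ∈ mIn n ^ 2 := by
  refine sub_Xn_mem_pow_two_iff.mpr ⟨fun i => ?_, ?_⟩ i
  · rw [constantCoeff_mulVec, show (fun j => constantCoeff (φ j)) = 0 from funext hφ.1,
      Matrix.mulVec_zero, Pi.zero_apply]
  · rw [linMn_mulVec, Matrix.nonsing_inv_mul _ hφ.2]

theorem linear_factorization_iff {φ : Fin n → Rn n} (hφ : IsUnit (linMn φ).det) (E : Fin n → Rn n) :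
    (∀ i, φ i = ∑ j, cfn (single j 1) (φ i) • E j) ↔ E = C.mapMatrix (linMn φ)⁻¹ *ᵥ φ := by
  have hmul : (∀ i, φ i = ∑ j, cfn (single j 1) (φ i) • E j) ↔ φ = C.mapMatrix (linMn φ) *ᵥ E := by
    simp only [funext_iff, Matrix.mulVec, dotProduct, smul_eq_C_mul]
    rfl
  rw [hmul]
  refine Matrix.eq_mulVec_iff_of_mul_eq_one ?_ ?_
  · rw [← map_mul, Matrix.mul_nonsing_inv _ hφ, map_one]
  · rw [← map_mul, Matrix.nonsing_inv_mul _ hφ, map_one]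

end Diffeomorphisms

/-- **Existence of the logarithm, and bijectivity of the exponential map.**
(i) Every formal diffeomorphism `Φ` factors uniquely as `φ ∘ exp(F)` with `F(𝔪) ⊆ 𝔪²`,
where `φ` is the linear diffeomorphism given by the Jacobian of `Φ` at `0` (so that the
`i`-th component of `Φ` is `∑ⱼ Jᵢⱼ · exp(F)*(xⱼ)`).
(ii) For `k ≥ 2`, `F ↦ exp(F)` is a bijection from vector fields with components in `𝔪^k`
onto formal diffeomorphisms tangent to the identity up to order `k-1`. -/
theorem exp_log_bijection (n : ℕ) :
    (∀ φ : Fin n → Rn n, IsDiffeoN φ →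
      ∃! F : Fin n → Rn n, (∀ i, F i ∈ mIn n ^ 2) ∧
        ∀ i, φ i = ∑ j : Fin n,
          cfn (Finsupp.single j 1) (φ i) • expD (VFn F) (Xn j)) ∧
    (∀ k : ℕ, 2 ≤ k →
      Set.BijOn (fun (F : Fin n → Rn n) => fun i => expD (VFn F) (Xn i))
        {F | ∀ i, F i ∈ mIn n ^ k}
        {ψ | IsDiffeoN ψ ∧ ∀ i, ψ i - Xn i ∈ mIn n ^ k}) := by
  refine ⟨fun φ hφ => ?_, fun k hk => ⟨fun F hF => ⟨?_, (expMap_bijOn hk).mapsTo hF⟩,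
    (expMap_bijOn hk).injOn, fun ψ hψ => (expMap_bijOn hk).surjOn hψ.2⟩⟩
  · have hbij := expMap_bijOn (n := n) le_rfl
    obtain ⟨F, hF, hFψ⟩ := hbij.surjOn (inv_linMn_mulVec_sub_Xn_mem hφ)
    refine ⟨F, ⟨hF, (linear_factorization_iff hφ.2 _).mpr hFψ⟩, fun G ⟨hG, hGφ⟩ => ?_⟩
    exact hbij.injOn hG hF (((linear_factorization_iff hφ.2 _).mp hGφ).trans hFψ.symm)
  · exact isDiffeoN_of_sub_Xn_mem fun i =>
      Ideal.pow_le_pow_right hk ((expMap_bijOn hk).mapsTo hF i)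
end
end
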